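/- Let n ≥ 1. For permutations β₁, β₂, β₃, β₄ of {1,…,2n}, the chain functional F(β) := |β₁| + 2|γ_{n,n}⁻¹β₂| + |β₃| + |γ_{n,n}⁻¹β₃| + |β₄| + |β₁⁻¹β₂| + |β₂⁻¹β₃| + |β₃⁻¹β₄| attains the value 3(2n − 2) (its minimum) if and only if Id ≤ β₁ ≤ β₂ ≤ γ_{n,n} and Id ≤ β₄ ≤ β₃ ≤ β₂ ≤ γ_{n,n}. -/

import Mathlib

/-!
For a permutation `σ` of a finite set of size `m`, `cycleCount σ` is the number of cycles
(fixed points count as cycles) and `permLen σ = m - cycleCount σ` (the minimal number of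
transpositions needed to write `σ`).  We model `{1,…,2n}` as `Fin n ⊕ Fin n`, the first
summand being `{1,…,n}` and the second `{n+1,…,2n}`.  `gammaNN n` is the product of the
two `n`-cycles `(1,2,…,n)` and `(n+1,…,2n)`.
-/

/-- The number of cycles of a permutation, where fixed points count as cycles. -/
noncomputable def cycleCount {α : Type*} [Fintype α] [DecidableEq α]
    (σ : Equiv.Perm α) : ℕ :=
  Multiset.card σ.cycleType + (Fintype.card α - σ.support.card)

/-- `|σ| = m - #(σ)`, the minimal number of transpositions whose product is `σ`. -/
noncomputable def permLen {α : Type*} [Fintype α] [DecidableEq α]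
    (σ : Equiv.Perm α) : ℕ :=
  Fintype.card α - cycleCount σ

/-- `γ_{n,n}`: the product of the two `n`-cycles `(1,…,n)` and `(n+1,…,2n)`. -/
def gammaNN (n : ℕ) : Equiv.Perm (Fin n ⊕ Fin n) :=
  Equiv.sumCongr (finRotate n) (finRotate n)

/-- A permutation of `{1,…,2n}` is connected if some cycle of it contains both an
element of `{1,…,n}` and an element of `{n+1,…,2n}`. -/
def IsConnectedPerm {n : ℕ} (β : Equiv.Perm (Fin n ⊕ Fin n)) : Prop :=
  ∃ a b : Fin n, β.SameCycle (Sum.inl a) (Sum.inr b)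

/-- The geodesic partial order on permutations: `σ ≤ τ` iff `|σ| + |σ⁻¹τ| = |τ|`. -/
def permLe {α : Type*} [Fintype α] [DecidableEq α] (σ τ : Equiv.Perm α) : Prop :=
  permLen σ + permLen (σ⁻¹ * τ) = permLen τ

/-- The chain functional
`F(β) = |β₁| + 2|γ_{n,n}⁻¹β₂| + |β₃| + |γ_{n,n}⁻¹β₃| + |β₄| + |β₁⁻¹β₂| + |β₂⁻¹β₃| + |β₃⁻¹β₄|`. -/
noncomputable def chainF {n : ℕ} (b₁ b₂ b₃ b₄ : Equiv.Perm (Fin n ⊕ Fin n)) : ℕ :=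
  permLen b₁ + 2 * permLen ((gammaNN n)⁻¹ * b₂) + permLen b₃
    + permLen ((gammaNN n)⁻¹ * b₃) + permLen b₄
    + permLen (b₁⁻¹ * b₂) + permLen (b₂⁻¹ * b₃) + permLen (b₃⁻¹ * b₄)

/-!
Multiplying by a transposition changes `permLen` by at most one, and peeling `swap x (σ x)` off
`σ` lowers it by exactly one; induction on `|σ|` then gives `|στ| ≤ |σ| + |τ|`, so
`d(σ, τ) = |σ⁻¹τ|` is a metric. The functional `F` is the total length of three paths from `Id`
to `γ_{n,n}`, namely `Id → β₁ → β₂ → γ`, `Id → β₄ → β₃ → β₂ → γ` and `Id → β₃ → γ`, so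
`F ≥ 3|γ_{n,n}| = 3(2n - 2)`. Equality forces the first two paths to be geodesics, and conversely
then `|β₃| + |β₃⁻¹γ| ≤ |β₃| + |β₃⁻¹β₂| + |β₂⁻¹γ| = |γ|` makes the third one a geodesic as well.
-/

open Equiv Equiv.Perm

section PermLen

variable {α : Type*} [Fintype α] [DecidableEq α]

theorem card_cycleType_le_sum_cycleType (σ : Perm α) :
    Multiset.card σ.cycleType ≤ σ.cycleType.sum := by
  simpa using Multiset.card_nsmul_le_sum (s := σ.cycleType) (a := 1)
    fun k hk => one_le_two.trans (two_le_of_mem_cycleType hk)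

theorem permLen_eq_sum_cycleType_sub_card (σ : Perm α) :
    permLen σ = σ.cycleType.sum - Multiset.card σ.cycleType := by
  have hle := card_cycleType_le_sum_cycleType σ
  have hsum := sum_cycleType_le σ
  unfold permLen cycleCount
  rw [← sum_cycleType]
  omega

@[simp]
theorem permLen_one : permLen (1 : Perm α) = 0 := by
  simp [permLen_eq_sum_cycleType_sub_card]

@[simp]
theorem permLen_inv (σ : Perm α) : permLen σ⁻¹ = permLen σ := by
  simp only [permLen_eq_sum_cycleType_sub_card, cycleType_inv]

theorem permLen_inv_mul_comm (σ τ : Perm α) : permLen (σ⁻¹ * τ) = permLen (τ⁻¹ * σ) := by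
  rw [← permLen_inv, mul_inv_rev, inv_inv]

theorem Equiv.Perm.Disjoint.permLen_mul {σ τ : Perm α} (h : σ.Disjoint τ) :
    permLen (σ * τ) = permLen σ + permLen τ := by
  have hσ := card_cycleType_le_sum_cycleType σ
  have hτ := card_cycleType_le_sum_cycleType τ
  simp only [permLen_eq_sum_cycleType_sub_card, h.cycleType_mul, Multiset.sum_add,
    Multiset.card_add]
  omega

theorem Equiv.Perm.IsCycle.permLen_eq {σ : Perm α} (hσ : σ.IsCycle) :
    permLen σ = σ.support.card - 1 := by
  simp [permLen_eq_sum_cycleType_sub_card, hσ.cycleType]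

theorem permLen_extendDomain {β : Type*} [Fintype β] [DecidableEq β] {p : β → Prop}
    [DecidablePred p] (f : α ≃ Subtype p) (σ : Perm α) :
    permLen (σ.extendDomain f) = permLen σ := by
  simp only [permLen_eq_sum_cycleType_sub_card, cycleType_extendDomain]

theorem Equiv.Perm.IsCycle.permLen_swap_mul {c : Perm α} (hc : c.IsCycle) {x : α}
    (hx : c x ≠ x) :
    permLen (swap x (c x) * c) + 1 = permLen c := by
  have htwo := hc.two_le_card_support
  rw [hc.permLen_eq]
  by_cases hcc : c (c x) = x
  · have hswap : c = swap x (c x) := hc.eq_swap_of_apply_apply_eq_self hx hcc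
    have hone : swap x (c x) * c = 1 := by
      nth_rewrite 2 [hswap]
      exact swap_mul_self _ _
    rw [hone, permLen_one, hswap, card_support_swap hx.symm]
  · have hx_mem : x ∈ c.support := mem_support.mpr hx
    rw [(hc.swap_mul hx hcc).permLen_eq, support_swap_mul_eq c x hcc,
      Finset.sdiff_singleton_eq_erase, Finset.card_erase_of_mem hx_mem]
    omega

theorem permLen_swap_mul_add_one {σ : Perm α} {x : α} (hx : σ x ≠ x) :
    permLen (swap x (σ x) * σ) + 1 = permLen σ := by
  set c := σ.cycleOf x
  have hcx : c x = σ x := cycleOf_apply_self σ x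
  have hd : (σ * c⁻¹).Disjoint c := disjoint_mul_inv_of_mem_cycleFactorsFinset
    (cycleOf_mem_cycleFactorsFinset_iff.mpr (mem_support.mpr hx))
  have hσ : σ = c * (σ * c⁻¹) := by rw [← hd.commute.eq, inv_mul_cancel_right]
  have hd' : (swap x (c x) * c).Disjoint (σ * c⁻¹) :=
    hd.symm.mono (fun y hy => (mem_support_swap_mul_imp_mem_support_ne hy).1) le_rfl
  have hsplit : swap x (σ x) * σ = swap x (c x) * c * (σ * c⁻¹) := by
    rw [hcx, mul_assoc, ← hσ]
  rw [hsplit, hd'.permLen_mul, add_right_comm,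
    (isCycle_cycleOf σ hx).permLen_swap_mul (hcx ▸ hx), ← hd.symm.permLen_mul, ← hσ]

theorem permLen_swap_mul_of_apply_eq {σ : Perm α} {a b : α} (hab : a ≠ b) (ha : σ a = a) :
    permLen (swap a b * σ) = permLen σ + 1 := by
  have hρa : (swap a b * σ) a = b := by rw [mul_apply, ha, swap_apply_left]
  have hpeel := permLen_swap_mul_add_one (σ := swap a b * σ) (x := a)
    (by rw [hρa]; exact hab.symm)
  rwa [hρa, ← mul_assoc, swap_mul_self, one_mul, eq_comm] at hpeel

theorem permLen_swap_mul_le (σ : Perm α) {a b : α} (hab : a ≠ b) :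
    permLen (swap a b * σ) ≤ permLen σ + 1 := by
  induction hk : permLen σ using Nat.strong_induction_on generalizing σ a b with
  | _ k ih =>
  subst hk
  by_cases ha : σ a = a
  · exact (permLen_swap_mul_of_apply_eq hab ha).le
  have hpeel := permLen_swap_mul_add_one ha
  by_cases hσa : σ a = b
  · rw [hσa] at hpeel
    omega
  set c := σ a
  set σ' := swap a c * σ
  have hσ'a : σ' a = a := by simp [σ', c]
  have hac : a ≠ c := Ne.symm ha
  -- conjugating `swap c b` by `swap a c` gives `swap a b`
  have hconj : swap a b * σ = swap a c * (swap c b * σ') := by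
    have h := swap_apply_apply (swap a c) c b
    rw [swap_apply_right, swap_apply_of_ne_of_ne hab.symm (Ne.symm hσa), swap_inv] at h
    rw [h, mul_assoc, mul_assoc]
  have hρa : (swap c b * σ') a = a := by
    rw [mul_apply, hσ'a, swap_apply_of_ne_of_ne hac hab]
  have hρ := @ih (permLen σ') (by omega) σ' c b hσa rfl
  rw [hconj, permLen_swap_mul_of_apply_eq hac hρa]
  omega

theorem permLen_eq_zero_iff {σ : Perm α} : permLen σ = 0 ↔ σ = 1 := by
  refine ⟨fun h => ?_, fun h => h ▸ permLen_one⟩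
  by_contra hσ
  obtain ⟨x, hx⟩ : ∃ x, σ x ≠ x := not_forall.mp fun h' => hσ (Equiv.ext h')
  have := permLen_swap_mul_add_one hx
  omega

theorem permLen_mul_le (σ τ : Perm α) : permLen (σ * τ) ≤ permLen σ + permLen τ := by
  induction hk : permLen σ generalizing σ with
  | zero => simp [permLen_eq_zero_iff.mp hk]
  | succ k ih =>
    obtain ⟨x, hx⟩ : ∃ x, σ x ≠ x :=
      not_forall.mp fun h => by simp [show σ = 1 from Equiv.ext h] at hk
    have hpeel := permLen_swap_mul_add_one hx
    have hσ : σ * τ = swap x (σ x) * (swap x (σ x) * σ * τ) := by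
      rw [← mul_assoc, ← mul_assoc, swap_mul_self, one_mul]
    have := ih (swap x (σ x) * σ) (by omega)
    calc permLen (σ * τ) ≤ permLen (swap x (σ x) * σ * τ) + 1 :=
          hσ ▸ permLen_swap_mul_le _ hx.symm
      _ ≤ k + 1 + permLen τ := by omega

theorem permLen_inv_mul_le_add (ρ σ τ : Perm α) :
    permLen (ρ⁻¹ * τ) ≤ permLen (ρ⁻¹ * σ) + permLen (σ⁻¹ * τ) := by
  simpa [mul_assoc] using permLen_mul_le (ρ⁻¹ * σ) (σ⁻¹ * τ)

theorem permLen_sumCongr {β : Type*} [Fintype β] [DecidableEq β] (σ : Perm α) (τ : Perm β) :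
    permLen (Equiv.sumCongr σ τ) = permLen σ + permLen τ := by
  have hσ : Perm.sumCongr σ (1 : Perm β) = σ.extendDomain sumIsLeft.symm := by
    ext (a | b)
    · exact (extendDomain_apply_image σ sumIsLeft.symm a).symm
    · simp [extendDomain_apply_not_subtype]
  have hτ : Perm.sumCongr (1 : Perm α) τ = τ.extendDomain sumIsRight.symm := by
    ext (a | b)
    · simp [extendDomain_apply_not_subtype]
    · exact (extendDomain_apply_image τ sumIsRight.symm b).symm
  have hdisj : (Perm.sumCongr σ (1 : Perm β)).Disjoint (Perm.sumCongr 1 τ) := by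
    rintro (a | b) <;> simp
  have hsplit : Perm.sumCongr σ τ = Perm.sumCongr σ 1 * Perm.sumCongr 1 τ := by simp
  rw [← Perm.sumCongr, hsplit, hdisj.permLen_mul, hσ, hτ, permLen_extendDomain,
    permLen_extendDomain]

end PermLen

theorem permLen_finRotate (n : ℕ) : permLen (finRotate n) = n - 1 := by
  match n with
  | 0 | 1 => exact permLen_one
  | n + 2 => simp [permLen_eq_sum_cycleType_sub_card, cycleType_finRotate]

theorem permLen_gammaNN (n : ℕ) : permLen (gammaNN n) = 2 * n - 2 := by
  rw [gammaNN, permLen_sumCongr, permLen_finRotate]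
  omega

theorem chainF_eq_min_iff_general (n : ℕ)
    (b₁ b₂ b₃ b₄ : Equiv.Perm (Fin n ⊕ Fin n)) :
    chainF b₁ b₂ b₃ b₄ = 3 * (2 * n - 2) ↔
      (permLe 1 b₁ ∧ permLe b₁ b₂ ∧ permLe b₂ (gammaNN n)) ∧
        (permLe 1 b₄ ∧ permLe b₄ b₃ ∧ permLe b₃ b₂ ∧ permLe b₂ (gammaNN n)) := by
  have h₁₂ := permLen_inv_mul_le_add 1 b₁ b₂
  have h₂γ := permLen_inv_mul_le_add 1 b₂ (gammaNN n)
  have h₄₃ := permLen_inv_mul_le_add 1 b₄ b₃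
  have h₃₂ := permLen_inv_mul_le_add 1 b₃ b₂
  have h₃γ := permLen_inv_mul_le_add 1 b₃ (gammaNN n)
  have h₃₂γ := permLen_inv_mul_le_add b₃ b₂ (gammaNN n)
  simp only [chainF, permLe, inv_one, one_mul, permLen_one, zero_add, true_and,
    ← permLen_gammaNN, permLen_inv_mul_comm (gammaNN n), permLen_inv_mul_comm b₂ b₃,
    permLen_inv_mul_comm b₃ b₄] at *
  omega

/-- The chain functional attains its minimum `3(2n-2)` exactly on the configurations
`Id ≤ β₁ ≤ β₂ ≤ γ_{n,n}` and `Id ≤ β₄ ≤ β₃ ≤ β₂ ≤ γ_{n,n}`. -/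
theorem chainF_eq_min_iff (n : ℕ) (hn : 1 ≤ n)
    (b₁ b₂ b₃ b₄ : Equiv.Perm (Fin n ⊕ Fin n)) :
    chainF b₁ b₂ b₃ b₄ = 3 * (2 * n - 2) ↔
      (permLe 1 b₁ ∧ permLe b₁ b₂ ∧ permLe b₂ (gammaNN n)) ∧
        (permLe 1 b₄ ∧ permLe b₄ b₃ ∧ permLe b₃ b₂ ∧ permLe b₂ (gammaNN n)) :=
  chainF_eq_min_iff_general n b₁ b₂ b₃ b₄
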